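/- In the polynomial ring ℚ[a, b, c, d, e, f], let I be the ideal generated by a, b², c², c − 2e + 2, 2e − c + 2d, and e² + 2ef + f² − 2ce − cf. Then the quotient ring ℚ[a, b, c, d, e, f]/I is a finite-dimensional ℚ-vector space of dimension 8. (Hence the configuration (a, b, c, d, e, f) = (0, 0, 0, −1, 1, −1) of the Leonardo structure with λ = 3 is a realization of multiplicity 8, i.e. it has a seventh-order flexion, confirming Tarnai's (2^λ − 1)-order flex for λ = 3; the ideal is the corrected primary component, with generator b replaced by b², fixing the faulty output of Maple's primary decomposition.) -/

import Mathlib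

/-!
Modulo the ideal, the linear generators give `a = 0`, `d = -1` and `e = c/2 + 1`, after which the
last generator becomes `(f + 1)² - c` (using `c² = 0`). So the quotient is generated by `b` and
`t = f + 1` subject only to `b² = 0` and `t⁴ = c² = 0`: it is `K[u]/(u²) ⊗ K[w]/(w⁴)`, of dimension
`2 · 4 = 8`.
-/

open MvPolynomial

open scoped TensorProduct

noncomputable section

section General

variable {K : Type*} [Field K]

theorem finrank_adjoinRoot_tensorProduct {f g : Polynomial K} (hf : f ≠ 0) (hg : g ≠ 0) :
    Module.finrank K (AdjoinRoot f ⊗[K] AdjoinRoot g) = f.natDegree * g.natDegree := by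
  rw [Module.finrank_tensorProduct, (AdjoinRoot.powerBasis hf).finrank,
    (AdjoinRoot.powerBasis hg).finrank, AdjoinRoot.powerBasis_dim, AdjoinRoot.powerBasis_dim]

theorem two_mul_algebraMap_inv_two (K A : Type*) [Field K] [NeZero (2 : K)] [CommRing A]
    [Algebra K A] : 2 * algebraMap K A 2⁻¹ = 1 := by
  rw [← map_ofNat (algebraMap K A) 2, ← map_mul, mul_inv_cancel₀ two_ne_zero, map_one]

theorem AdjoinRoot.root_X_pow_pow (n : ℕ) :
    AdjoinRoot.root (Polynomial.X ^ n : Polynomial K) ^ n = 0 := by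
  rw [← AdjoinRoot.mk_X, ← map_pow, AdjoinRoot.mk_self]

variable {A : Type*} [CommRing A] [Algebra K A]

def AdjoinRoot.liftOfPowEqZero {n : ℕ} {x : A} (hx : x ^ n = 0) :
    AdjoinRoot (Polynomial.X ^ n : Polynomial K) →ₐ[K] A :=
  AdjoinRoot.liftAlgHom _ (Algebra.ofId K A) x (by simpa using hx)

theorem AdjoinRoot.liftOfPowEqZero_root {n : ℕ} {x : A} (hx : x ^ n = 0) :
    AdjoinRoot.liftOfPowEqZero (K := K) hx (AdjoinRoot.root _) = x :=
  AdjoinRoot.liftAlgHom_root ..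

end General

namespace Leonardo

variable (K : Type*) [Field K]

def generators : Set (MvPolynomial (Fin 6) K) :=
  {X 0, X 1 ^ 2, X 2 ^ 2, X 2 - 2 * X 4 + 2, 2 * X 4 - X 2 + 2 * X 3,
    X 4 ^ 2 + 2 * X 4 * X 5 + X 5 ^ 2 - 2 * X 2 * X 4 - X 2 * X 5}

def ideal : Ideal (MvPolynomial (Fin 6) K) := Ideal.span (generators K)

abbrev LocalAlgebra := MvPolynomial (Fin 6) K ⧸ ideal K

abbrev Model :=
  AdjoinRoot (Polynomial.X ^ 2 : Polynomial K) ⊗[K] AdjoinRoot (Polynomial.X ^ 4 : Polynomial K)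

variable {K}

local notation "½" => algebraMap K _ (2⁻¹ : K)

local notation:max "x" i:max => Ideal.Quotient.mk (ideal K) (X i)

def u : Model K := AdjoinRoot.root _ ⊗ₜ 1

def w : Model K := 1 ⊗ₜ AdjoinRoot.root _

theorem u_sq : (u : Model K) ^ 2 = 0 := by
  rw [u, Algebra.TensorProduct.tmul_pow, AdjoinRoot.root_X_pow_pow, TensorProduct.zero_tmul]

theorem w_pow_four : (w : Model K) ^ 4 = 0 := by
  rw [w, Algebra.TensorProduct.tmul_pow, AdjoinRoot.root_X_pow_pow, TensorProduct.tmul_zero]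

theorem mk_X_relations :
    x 0 = 0 ∧ x 1 ^ 2 = 0 ∧ x 2 ^ 2 = 0 ∧ x 2 - 2 * x 4 + 2 = 0 ∧
      2 * x 4 - x 2 + 2 * x 3 = 0 ∧
      x 4 ^ 2 + 2 * x 4 * x 5 + x 5 ^ 2 - 2 * x 2 * x 4 - x 2 * x 5 = 0 := by
  have h (p) (hp : p ∈ generators K) : Ideal.Quotient.mk (ideal K) p = 0 :=
    Ideal.Quotient.eq_zero_iff_mem.mpr (Ideal.subset_span hp)
  simpa only [generators, Set.mem_insert_iff, Set.mem_singleton_iff, forall_eq_or_imp, forall_eq,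
    map_sub, map_add, map_mul, map_pow, map_ofNat] using h

variable [NeZero (2 : K)]

theorem mk_X_three : x 3 = -1 := by
  obtain ⟨-, -, -, g₄, g₅, -⟩ := mk_X_relations (K := K)
  have h₂ := two_mul_algebraMap_inv_two K (LocalAlgebra K)
  linear_combination ½ * (g₄ + g₅) - (x 3 + 1) * h₂

theorem mk_X_two : x 2 = (x 5 + 1) ^ 2 := by
  obtain ⟨-, -, g₃, g₄, -, g₆⟩ := mk_X_relations (K := K)
  have h₂ := two_mul_algebraMap_inv_two K (LocalAlgebra K)
  -- `4 ((f + 1)² - c) = 4 g₆ + 3 g₃ + (2e + 4f + 2 - 3c) g₄`; the `h₂` term divides by `4`.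
  linear_combination ((x 5 + 1) ^ 2 - x 2) * (2 * ½ + 1) * h₂
    - ½ ^ 2 * (4 * g₆ + 3 * g₃ + (-3 * x 2 + 2 * x 4 + 4 * x 5 + 2) * g₄)

theorem mk_X_four : x 4 = ½ * (x 5 + 1) ^ 2 + 1 := by
  obtain ⟨-, -, -, g₄, -, -⟩ := mk_X_relations (K := K)
  have h₂ := two_mul_algebraMap_inv_two K (LocalAlgebra K)
  linear_combination ½ * mk_X_two (K := K) - ½ * g₄ - (x 4 - 1) * h₂

theorem mk_X_five_add_one_pow_four : (x 5 + 1) ^ 4 = 0 := by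
  obtain ⟨-, -, g₃, -, -, -⟩ := mk_X_relations (K := K)
  linear_combination g₃ - ((x 5 + 1) ^ 2 + x 2) * mk_X_two (K := K)

def point : Fin 6 → Model K :=
  ![0, u, w ^ 2, -1, ½ * w ^ 2 + 1, w - 1]

theorem aeval_point_eq_zero_of_mem_ideal : ∀ p ∈ ideal K, aeval (point (K := K)) p = 0 := by
  have h₂ := two_mul_algebraMap_inv_two K (Model K)
  suffices ideal K ≤ RingHom.ker (aeval (point (K := K))) from fun p hp => this hp
  rw [ideal, Ideal.span_le]
  rintro p (rfl | rfl | rfl | rfl | rfl | rfl) <;>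
    simp only [SetLike.mem_coe, RingHom.mem_ker, map_add, map_sub, map_mul, map_pow, map_ofNat,
      aeval_X, point, Matrix.cons_val]
  · exact u_sq
  · linear_combination w_pow_four (K := K)
  · linear_combination -(w ^ 2) * h₂
  · linear_combination w ^ 2 * h₂
  · linear_combination (½ ^ 2 - 2 * ½) * w_pow_four (K := K) + w ^ 3 * h₂

def toModel : LocalAlgebra K →ₐ[K] Model K :=
  Ideal.Quotient.liftₐ (ideal K) (aeval point) aeval_point_eq_zero_of_mem_ideal

def ofModel : Model K →ₐ[K] LocalAlgebra K :=
  Algebra.TensorProduct.productMap (AdjoinRoot.liftOfPowEqZero mk_X_relations.2.1)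
    (AdjoinRoot.liftOfPowEqZero mk_X_five_add_one_pow_four)

theorem toModel_mk_X (i : Fin 6) : toModel (x i) = point i :=
  (AlgHom.congr_fun (Ideal.Quotient.liftₐ_comp (ideal K) (aeval point)
    aeval_point_eq_zero_of_mem_ideal) (X i)).trans (aeval_X point i)

theorem ofModel_u : ofModel u = x 1 :=
  (Algebra.TensorProduct.productMap_left_apply ..).trans (AdjoinRoot.liftOfPowEqZero_root _)

theorem ofModel_w : ofModel w = x 5 + 1 :=
  (Algebra.TensorProduct.productMap_right_apply ..).trans (AdjoinRoot.liftOfPowEqZero_root _)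

theorem toModel_comp_ofModel : toModel.comp ofModel = AlgHom.id K (Model K) := by
  refine Algebra.TensorProduct.ext (AdjoinRoot.algHom_ext ?_) (AdjoinRoot.algHom_ext ?_)
  · change toModel (ofModel u) = u
    rw [ofModel_u, toModel_mk_X]
    rfl
  · change toModel (ofModel w) = w
    rw [ofModel_w, map_add, map_one, toModel_mk_X]
    exact sub_add_cancel _ _

theorem ofModel_comp_toModel : ofModel.comp toModel = AlgHom.id K (LocalAlgebra K) := by
  refine Ideal.Quotient.algHom_ext K (MvPolynomial.algHom_ext fun i => ?_)
  change ofModel (toModel (x i)) = x i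
  rw [toModel_mk_X]
  fin_cases i
  · exact (map_zero _).trans mk_X_relations.1.symm
  · exact ofModel_u
  · change ofModel (w ^ 2) = x 2
    rw [map_pow, ofModel_w, mk_X_two]
  · change ofModel (-1) = x 3
    rw [map_neg, map_one, mk_X_three]
  · change ofModel (½ * w ^ 2 + 1) = x 4
    rw [map_add, map_mul, AlgHom.commutes, map_pow, ofModel_w, map_one, mk_X_four]
  · change ofModel (w - 1) = x 5
    rw [map_sub, ofModel_w, map_one, add_sub_cancel_right]

def equivModel : LocalAlgebra K ≃ₐ[K] Model K :=
  AlgEquiv.ofAlgHom toModel ofModel toModel_comp_ofModel ofModel_comp_toModel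

theorem finrank_eq_eight : Module.finrank K (LocalAlgebra K) = 8 := by
  rw [equivModel.toLinearEquiv.finrank_eq,
    finrank_adjoinRoot_tensorProduct (pow_ne_zero _ Polynomial.X_ne_zero)
      (pow_ne_zero _ Polynomial.X_ne_zero),
    Polynomial.natDegree_X_pow, Polynomial.natDegree_X_pow]

end Leonardo

/-- The Leonardo structure with `λ = 3`: the quotient of `ℚ[a, b, c, d, e, f]`
by the (corrected) primary ideal
`⟨a, b², c², c - 2e + 2, 2e - c + 2d, e² + 2ef + f² - 2ce - cf⟩` supported at
the configuration `(0, 0, 0, -1, 1, -1)` is an `8`-dimensional `ℚ`-vector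
space, so this configuration is a realization of multiplicity `8`, i.e. it has
a seventh-order flexion. -/
theorem leonardo_lambda_three_multiplicity_eight :
    let a : MvPolynomial (Fin 6) ℚ := X 0
    let b : MvPolynomial (Fin 6) ℚ := X 1
    let c : MvPolynomial (Fin 6) ℚ := X 2
    let d : MvPolynomial (Fin 6) ℚ := X 3
    let e : MvPolynomial (Fin 6) ℚ := X 4
    let f : MvPolynomial (Fin 6) ℚ := X 5
    let I : Ideal (MvPolynomial (Fin 6) ℚ) :=
      Ideal.span {a, b ^ 2, c ^ 2, c - 2 * e + 2, 2 * e - c + 2 * d,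
        e ^ 2 + 2 * e * f + f ^ 2 - 2 * c * e - c * f}
    FiniteDimensional ℚ (MvPolynomial (Fin 6) ℚ ⧸ I) ∧
      Module.finrank ℚ (MvPolynomial (Fin 6) ℚ ⧸ I) = 8 :=
  have h : Module.finrank ℚ (Leonardo.LocalAlgebra ℚ) = 8 := Leonardo.finrank_eq_eight
  ⟨Module.finite_of_finrank_pos (h ▸ by norm_num), h⟩
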